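/- Let D- be a canonical negative Boolean automaton double-cycle where the left cycle has odd size n > 1. Then any configuration x with x^ℓ = (10)^{(n-1)/2}1 (alternating word of odd length n starting and ending with 1) is irreversible: if x' is obtained from x by one effective asynchronous update, then x is not reachable from x' by any sequence of asynchronous updates. -/

import Mathlib

/-- A configuration of a Boolean automaton double-cycle with cycles of sizes `n`
and `m`: the shared automaton `c` is index 0 of both cycles (so valid
configurations satisfy `x.1 0 = x.2 0`). -/
abbrev Cfg (n m : ℕ) := (Fin n → Bool) × (Fin m → Bool)

/-- One asynchronous single-automaton update in a double-cycle whose shared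
automaton `c` computes `fc`; every non-shared automaton copies its predecessor. -/
inductive Step {n m : ℕ} (fc : Cfg n m → Bool) : Cfg n m → Cfg n m → Prop
  | left (x : Cfg n m) (i : Fin n) (hi : 1 ≤ i.val) :
      Step fc x (Function.update x.1 i (x.1 ⟨i.val - 1, by have := i.isLt; omega⟩), x.2)
  | right (x : Cfg n m) (j : Fin m) (hj : 1 ≤ j.val) :
      Step fc x (x.1, Function.update x.2 j (x.2 ⟨j.val - 1, by have := j.isLt; omega⟩))
  | center (x : Cfg n m) (i : Fin n) (j : Fin m) (hi : i.val = 0) (hj : j.val = 0) :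
      Step fc x (Function.update x.1 i (fc x), Function.update x.2 j (fc x))

/-- `Steps fc k x y`: configuration `y` is obtained from `x` by exactly `k`
asynchronous single-automaton updates. -/
def Steps {n m : ℕ} (fc : Cfg n m → Bool) : ℕ → Cfg n m → Cfg n m → Prop
  | 0, x, y => x = y
  | k + 1, x, y => ∃ z, Step fc x z ∧ Steps fc k z y

/-! If a step leads into a configuration whose left cycle is alternating, it was an update of the
right cycle: a left update creates two equal neighbours, and an update of the shared automaton
reads the final `1` of the left cycle and writes `0`. So every configuration from which `x` is
reachable agrees with `x` on the left, the effective first step `x → x'` copied a predecessor in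
the right cycle, and so did every step back to `x`. Such copies never increase the set of
positions differing from their predecessor, ordered lexicographically, and an effective one
strictly decreases it, so `x` cannot be reached again. -/

open Function Relation

/-- `k - 1`, truncated at `0`: the automaton that `k` copies. -/
def predTrunc {m : ℕ} (k : Fin m) : Fin m := ⟨k.val - 1, lt_of_le_of_lt (Nat.sub_le _ _) k.isLt⟩

section Defects

variable {α : Type*} [DecidableEq α] {m : ℕ}

/-- Copying the predecessor at `j` only changes the marks at `j` and `j + 1`, hence the
lexicographic order. -/
def defects (y : Fin m → α) : Lex (Fin m → Bool) :=
  toLex fun k => decide (y k ≠ y (predTrunc k))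

theorem defects_update_lt (y : Fin m → α) (j : Fin m) (h : y j ≠ y (predTrunc j)) :
    defects (update y j (y (predTrunc j))) < defects y := by
  have hpred : predTrunc j ≠ j := fun hj => h (congrArg y hj.symm)
  refine ⟨j, fun k hk => ?_, ?_⟩
  · have hpk : predTrunc k ≠ j := fun e => by
      have : (predTrunc k).val ≤ k.val := Nat.sub_le _ _
      exact absurd (e ▸ this) (not_le.2 hk)
    change decide _ = decide _
    rw [update_of_ne hk.ne, update_of_ne hpk]
  · change decide _ < decide _
    simp [update_of_ne hpred, h]

theorem defects_update_le (y : Fin m → α) (j : Fin m) :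
    defects (update y j (y (predTrunc j))) ≤ defects y := by
  by_cases h : y j = y (predTrunc j)
  · rw [← h, update_eq_self]
  · exact (defects_update_lt y j h).le

end Defects

/-- The word `(10)^{(n-1)/2}1`. -/
def alternating (n : ℕ) : Fin n → Bool := fun i => decide (i.val % 2 = 0)

theorem update_predTrunc_ne_alternating {n : ℕ} (y : Fin n → Bool) (i : Fin n) (hi : 1 ≤ i.val) :
    update y i (y (predTrunc i)) ≠ alternating n := by
  intro h
  have hpred : predTrunc i ≠ i := Fin.ne_of_val_ne (by simp [predTrunc]; omega)
  have hi' := congrFun h i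
  have hp := congrFun h (predTrunc i)
  rw [update_self] at hi'
  rw [update_of_ne hpred, hi'] at hp
  have hval : (predTrunc i).val = i.val - 1 := rfl
  simp only [alternating, decide_eq_decide] at hp
  omega

section Backward

variable {n m : ℕ} {fc : Cfg n m → Bool}

theorem Step.eq_right_of_alternating (hn : 1 < n) (hodd : n % 2 = 1)
    (hfc : ∀ z : Cfg n m, z.1 ⟨n - 1, by omega⟩ = true → fc z = false)
    {z z' : Cfg n m} (hs : Step fc z z') (hz' : z'.1 = alternating n) :
    z.1 = z'.1 ∧ ∃ j : Fin m, z'.2 = update z.2 j (z.2 (predTrunc j)) := by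
  cases hs with
  | left i hi => exact absurd hz' (update_predTrunc_ne_alternating z.1 i hi)
  | right j _ => exact ⟨rfl, j, rfl⟩
  | center i j hi _ =>
    have hlast : (⟨n - 1, by omega⟩ : Fin n) ≠ i := Fin.ne_of_val_ne (by simp; omega)
    have h0 : update z.1 i (fc z) i = alternating n i := congrFun hz' i
    have h1 : update z.1 i (fc z) ⟨n - 1, by omega⟩ = alternating n ⟨n - 1, by omega⟩ :=
      congrFun hz' _
    rw [update_of_ne hlast] at h1
    rw [update_self, hfc z (by rw [h1]; simp [alternating]; omega)] at h0
    simp [alternating, hi] at h0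

theorem alternating_and_defects_le_of_reflTransGen (hn : 1 < n) (hodd : n % 2 = 1)
    (hfc : ∀ z : Cfg n m, z.1 ⟨n - 1, by omega⟩ = true → fc z = false)
    {z x : Cfg n m} (h : ReflTransGen (Step fc) z x) (hx : x.1 = alternating n) :
    z.1 = alternating n ∧ defects x.2 ≤ defects z.2 := by
  induction h using ReflTransGen.head_induction_on with
  | refl => exact ⟨hx, le_rfl⟩
  | head hs _ ih =>
    obtain ⟨hz, j, hj⟩ := hs.eq_right_of_alternating hn hodd hfc ih.1
    exact ⟨hz.trans ih.1, ih.2.trans (hj ▸ defects_update_le _ j)⟩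

end Backward

/-- In a canonical negative double-cycle whose left cycle has odd size n > 1, any
configuration whose left part is the alternating word (10)^{(n-1)/2}1 is
irreversible: after any effective update it can never be reached again. -/
theorem stmt15 (n m : ℕ) (hn : 1 < n) (hodd : n % 2 = 1) (hm : 0 < m)
    (x : Cfg n m)
    (hxl : ∀ i : Fin n, x.1 i = decide (i.val % 2 = 0)) :
    ∀ x' : Cfg n m,
      Step (fun z : Cfg n m => !(z.1 ⟨n - 1, by omega⟩) && !(z.2 ⟨m - 1, by omega⟩)) x x' →
      x' ≠ x →
      ¬ Relation.ReflTransGen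
          (Step (fun z : Cfg n m => !(z.1 ⟨n - 1, by omega⟩) && !(z.2 ⟨m - 1, by omega⟩)))
          x' x := by
  intro x' hstep hne hreach
  have hneg : ∀ z : Cfg n m, z.1 ⟨n - 1, by omega⟩ = true →
      (!(z.1 ⟨n - 1, by omega⟩) && !(z.2 ⟨m - 1, by omega⟩)) = false := fun z hz => by simp [hz]
  obtain ⟨hx'l, hle⟩ := alternating_and_defects_le_of_reflTransGen hn hodd hneg hreach (funext hxl)
  obtain ⟨hsame, j, hj⟩ := hstep.eq_right_of_alternating hn hodd hneg hx'l
  have heff : x.2 j ≠ x.2 (predTrunc j) := fun h =>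
    hne (Prod.ext hsame.symm (by rw [hj, ← h, update_eq_self]))
  exact (hj ▸ defects_update_lt x.2 j heff).not_ge hle
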